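/- Assume C is Z-prenormal and that every Z-normal epimorphism in C is a regular epimorphism. Let F be a Z-normal-epi-reflective full replete subcategory of C with reflector F̂ and unit η. Then the following are equivalent: (i) F is a Z-torsion-free subcategory of C; (ii) for every object X of C, if k : K → X is a Z-kernel of η_X, then the naturality square with sides k, η_K, η_X, F̂k (i.e., k ≫ η_X = η_K ≫ F̂k) is a pullback. -/

import Mathlib

open CategoryTheory

universe v u

variable {C : Type u} [Category.{v} C]

/-- A morphism is `Z`-trivial if it factors through an object of `Z`. -/
def IsZTrivial (Z : Set C) {A B : C} (f : A ⟶ B) : Prop :=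
  ∃ (M : C) (g : A ⟶ M) (h : M ⟶ B), M ∈ Z ∧ g ≫ h = f

/-- `k : K ⟶ A` is a `Z`-kernel of `f : A ⟶ B`. -/
def IsZKernel (Z : Set C) {K A B : C} (k : K ⟶ A) (f : A ⟶ B) : Prop :=
  IsZTrivial Z (k ≫ f) ∧
    ∀ (X : C) (x : X ⟶ A), IsZTrivial Z (x ≫ f) → ∃! x' : X ⟶ K, x' ≫ k = x

/-- `q : B ⟶ Q` is a `Z`-cokernel of `f : A ⟶ B`. -/
def IsZCokernel (Z : Set C) {A B Q : C} (f : A ⟶ B) (q : B ⟶ Q) : Prop :=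
  IsZTrivial Z (f ≫ q) ∧
    ∀ (X : C) (x : B ⟶ X), IsZTrivial Z (f ≫ x) → ∃! x' : Q ⟶ X, q ≫ x' = x

/-- A `Z`-normal monomorphism: a morphism occurring as a `Z`-kernel. -/
def IsZNormalMono (Z : Set C) {K A : C} (k : K ⟶ A) : Prop :=
  ∃ (B : C) (f : A ⟶ B), IsZKernel Z k f

/-- A `Z`-normal epimorphism: a morphism occurring as a `Z`-cokernel. -/
def IsZNormalEpi (Z : Set C) {B Q : C} (q : B ⟶ Q) : Prop :=
  ∃ (A : C) (f : A ⟶ B), IsZCokernel Z f q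

/-- A `Z`-exact sequence: the first morphism is a `Z`-kernel of the second,
and the second is a `Z`-cokernel of the first. -/
def IsZExact (Z : Set C) {A X B : C} (a : A ⟶ X) (b : X ⟶ B) : Prop :=
  IsZKernel Z a b ∧ IsZCokernel Z a b

/-- A class of objects is replete if it is closed under isomorphism. -/
def SetReplete (S : Set C) : Prop :=
  ∀ ⦃X Y : C⦄, X ∈ S → (X ≅ Y) → Y ∈ S

/-- `(T, F)` is a `Z`-torsion theory: every morphism from `T` to `F` is `Z`-trivial,
and every object has a `(T,F)`-presentation. -/
def IsZTorsionTheory (Z T F : Set C) : Prop :=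
  (∀ ⦃A B : C⦄, A ∈ T → B ∈ F → ∀ f : A ⟶ B, IsZTrivial Z f) ∧
  (∀ X : C, ∃ (A B : C) (a : A ⟶ X) (b : X ⟶ B), A ∈ T ∧ B ∈ F ∧ IsZExact Z a b)

/-- A morphism has `Z`-trivial `Z`-kernel if its `Z`-kernel exists and its domain lies in `Z`. -/
def HasZTrivialZKernel (Z : Set C) {X Y : C} (f : X ⟶ Y) : Prop :=
  ∃ (K : C) (k : K ⟶ X), IsZKernel Z k f ∧ K ∈ Z

/-- A class of objects is closed under `Z`-extensions. -/
def ClosedUnderZExtensions (Z S : Set C) : Prop :=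
  ∀ ⦃A X B : C⦄ (a : A ⟶ X) (b : X ⟶ B), IsZExact Z a b → A ∈ S → B ∈ S → X ∈ S

/-- `C` is `Z`-semi-prenormal: `Z` is mono-coreflective, `C` admits pullbacks along
`Z`-normal monomorphisms and `Z`-cokernels of `Z`-kernels, and the pullback of a
`Z`-normal epimorphism along a `Z`-normal monomorphism is a `Z`-normal epimorphism. -/
structure IsZSemiPrenormal (Z : Set C) : Prop where
  monoCoreflective : ∀ B : C, ∃ (ZB : C) (ε : ZB ⟶ B), ZB ∈ Z ∧ Mono ε ∧
    ∀ (W : C), W ∈ Z → ∀ g : W ⟶ B, ∃! g' : W ⟶ ZB, g' ≫ ε = g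
  hasPullbacksAlongNormalMonos : ∀ {A M B : C} (g : A ⟶ B) (m : M ⟶ B),
    IsZNormalMono Z m → ∃ (P : C) (p : P ⟶ A) (q : P ⟶ M), IsPullback p q g m
  hasCokernelsOfKernels : ∀ {K A : C} (k : K ⟶ A), IsZNormalMono Z k →
    ∃ (Q : C) (q : A ⟶ Q), IsZCokernel Z k q
  pullbackStability : ∀ {P M A B : C} (p : P ⟶ M) (q : P ⟶ A) (m : M ⟶ B) (f : A ⟶ B),
    IsPullback p q m f → IsZNormalEpi Z f → IsZNormalMono Z m → IsZNormalEpi Z p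

/-- `C` is `Z`-prenormal: `Z`-semi-prenormal, finitely complete, and `Z`-normal
epimorphisms are stable under pullback along arbitrary morphisms. -/
structure IsZPrenormal (Z : Set C) extends IsZSemiPrenormal Z : Prop where
  finitelyComplete : Limits.HasFiniteLimits C
  normalEpiStable : ∀ {P A B B' : C} (p : P ⟶ B') (q : P ⟶ A) (b : B' ⟶ B) (f : A ⟶ B),
    IsPullback p q b f → IsZNormalEpi Z f → IsZNormalEpi Z p

section AuxLemmas

open CategoryTheory.Limits

variable {Z : Set C}

lemma IsZTrivial.comp_left {A B D : C} {f : A ⟶ B} (h : IsZTrivial Z f) (e : D ⟶ A) :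
    IsZTrivial Z (e ≫ f) := by
  obtain ⟨M, g, m, hM, hgm⟩ := h
  exact ⟨M, e ≫ g, m, hM, by rw [Category.assoc, hgm]⟩

lemma IsZTrivial.comp_right {A B D : C} {f : A ⟶ B} (h : IsZTrivial Z f) (e : B ⟶ D) :
    IsZTrivial Z (f ≫ e) := by
  obtain ⟨M, g, m, hM, hgm⟩ := h
  exact ⟨M, g, m ≫ e, hM, by rw [← Category.assoc, hgm]⟩

lemma IsZKernel.mono {K A B : C} {k : K ⟶ A} {f : A ⟶ B} (h : IsZKernel Z k f) : Mono k := by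
  refine ⟨fun {Y} u v huv => ?_⟩
  have ht : IsZTrivial Z ((u ≫ k) ≫ f) := by
    rw [Category.assoc]; exact h.1.comp_left u
  obtain ⟨t, -, hu⟩ := h.2 Y (u ≫ k) ht
  exact (hu u rfl).trans (hu v huv.symm).symm

lemma IsZCokernel.epi {A B Q : C} {f : A ⟶ B} {q : B ⟶ Q} (h : IsZCokernel Z f q) : Epi q := by
  refine ⟨fun {Y} u v huv => ?_⟩
  have ht : IsZTrivial Z (f ≫ q ≫ u) := by
    rw [← Category.assoc]; exact h.1.comp_right u
  obtain ⟨t, -, hu⟩ := h.2 Y (q ≫ u) ht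
  exact (hu u rfl).trans (hu v huv.symm).symm

/-- The pullback of the coreflection counit along `f` is a `Z`-kernel of `f`. -/
lemma isZKernel_of_pullback {K A B W : C} {k : K ⟶ A} {p : K ⟶ W} {f : A ⟶ B} {ε : W ⟶ B}
    (hW : W ∈ Z) (hε : Mono ε)
    (huniv : ∀ (M : C), M ∈ Z → ∀ g : M ⟶ B, ∃! g' : M ⟶ W, g' ≫ ε = g)
    (hpb : IsPullback k p f ε) : IsZKernel Z k f := by
  have hkmono : ∀ {Y : C} (u₁ u₂ : Y ⟶ K), u₁ ≫ k = u₂ ≫ k → u₁ = u₂ := by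
    intro Y u₁ u₂ h12
    refine hpb.hom_ext h12 ?_
    rw [← cancel_mono ε, Category.assoc, Category.assoc, ← hpb.w, ← Category.assoc,
      ← Category.assoc, h12]
  constructor
  · exact ⟨W, p, ε, hW, hpb.w.symm⟩
  · intro Y x hx
    obtain ⟨M, u, v, hM, huv⟩ := hx
    obtain ⟨v', hv', -⟩ := huniv M hM v
    have hw : x ≫ f = (u ≫ v') ≫ ε := by
      rw [← huv, Category.assoc, hv']
    refine ⟨hpb.lift x (u ≫ v') hw, hpb.lift_fst _ _ _, ?_⟩
    intro y hy
    exact hkmono y _ (by rw [hy, hpb.lift_fst])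

/-- If `q` is a `Z`-cokernel of something and `k` is a `Z`-kernel of `q`,
then `q` is a `Z`-cokernel of `k`. -/
lemma isZCokernel_of_isZKernel {K A Q A₀ : C} {k : K ⟶ A} {q : A ⟶ Q} {f₀ : A₀ ⟶ A}
    (hk : IsZKernel Z k q) (hco : IsZCokernel Z f₀ q) : IsZCokernel Z k q := by
  refine ⟨hk.1, ?_⟩
  intro Y x hx
  obtain ⟨f₂, hf₂, -⟩ := hk.2 A₀ f₀ hco.1
  apply hco.2 Y x
  have heq : f₀ ≫ x = f₂ ≫ k ≫ x := by rw [← Category.assoc, hf₂]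
  rw [heq]
  exact hx.comp_left f₂

end AuxLemmas

/-- in a `Z`-prenormal category in which every `Z`-normal epimorphism
is a regular epimorphism, a `Z`-normal-epi-reflective subcategory `F` is
`Z`-torsion-free iff for every object `X`, the naturality square on a `Z`-kernel
`k : K ⟶ X` of the unit `η X` is a pullback. -/
theorem torsion_free_iff_naturality_square_pullback (Z F : Set C)
    (hZrep : SetReplete Z) (hFrep : SetReplete F)
    (hpn : IsZPrenormal Z)
    (hreg : ∀ {A B : C} (f : A ⟶ B), IsZNormalEpi Z f → Nonempty (RegularEpi f))
    (R : C → C) (η : ∀ X : C, X ⟶ R X)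
    (hRF : ∀ X : C, R X ∈ F)
    (hrefl : ∀ (X Y : C), Y ∈ F → ∀ g : X ⟶ Y, ∃! g' : R X ⟶ Y, η X ≫ g' = g)
    (hepi : ∀ X : C, IsZNormalEpi Z (η X)) :
    (∃ T : Set C, SetReplete T ∧ IsZTorsionTheory Z T F) ↔
      (∀ {K X : C} (k : K ⟶ X), IsZKernel Z k (η X) →
        ∀ (g : R K ⟶ R X), η K ≫ g = k ≫ η X → IsPullback k (η K) (η X) g) := by
  
  classical
  haveI : Limits.HasFiniteLimits C := hpn.finitelyComplete
  haveI : Limits.HasPullbacks C := inferInstance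
  constructor
  · -- (i) ⇒ (ii)
    rintro ⟨T, hTrep, hTT⟩ K X k hk g hg
    haveI hkm : Mono k := hk.mono
    -- Step 1: K belongs to T, hence η K is Z-trivial
    obtain ⟨A, B, a, b, hA, hB, hab⟩ := hTT.2 X
    obtain ⟨bbar, hbbar, -⟩ := hrefl X B hB b
    have hatriv : IsZTrivial Z (a ≫ η X) := hTT.1 hA (hRF X) _
    obtain ⟨a', ha', -⟩ := hk.2 A a hatriv
    have hkb : IsZTrivial Z (k ≫ b) := by
      rw [← hbbar, ← Category.assoc]
      exact hk.1.comp_right bbar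
    obtain ⟨k', hk', -⟩ := hab.1.2 K k hkb
    haveI ham : Mono a := hab.1.mono
    have h1 : a' ≫ k' = 𝟙 A := by
      rw [← cancel_mono a, Category.assoc, hk', ha', Category.id_comp]
    have h2 : k' ≫ a' = 𝟙 K := by
      rw [← cancel_mono k, Category.assoc, ha', hk', Category.id_comp]
    have hKT : K ∈ T := hTrep hA ⟨a', k', h1, h2⟩
    have hetaK : IsZTrivial Z (η K) := hTT.1 hKT (hRF K) _
    -- Z-objects belong to F
    have zSubF : ∀ M : C, M ∈ Z → M ∈ F := by
      intro M hM
      obtain ⟨A₁, B₁, a₁, b₁, hA₁, hB₁, hex⟩ := hTT.2 M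
      have ha₁ : IsZTrivial Z (a₁ ≫ 𝟙 M) := ⟨M, a₁ ≫ 𝟙 M, 𝟙 M, hM, Category.comp_id _⟩
      obtain ⟨σ, hσ, -⟩ := hex.2.2 M (𝟙 M) ha₁
      haveI : Epi b₁ := hex.2.epi
      have hσb : σ ≫ b₁ = 𝟙 B₁ := by
        rw [← cancel_epi b₁, ← Category.assoc, hσ, Category.id_comp, Category.comp_id]
      exact hFrep hB₁ ⟨σ, b₁, hσb, hσ⟩
    -- coreflection of R X
    obtain ⟨W, ε, hWZ, hεm, hεu⟩ := hpn.monoCoreflective (R X)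
    haveI := hεm
    have hWF : W ∈ F := zSubF W hWZ
    -- the canonical Z-kernel of η X
    have hpb := IsPullback.of_hasPullback (η X) ε
    have hk₀ : IsZKernel Z (Limits.pullback.fst (η X) ε) (η X) :=
      isZKernel_of_pullback hWZ hεm hεu hpb
    haveI hk₀m : Mono (Limits.pullback.fst (η X) ε) := hk₀.mono
    obtain ⟨φ, hφ, -⟩ := hk₀.2 K k hk.1
    obtain ⟨φ', hφ', -⟩ := hk.2 _ (Limits.pullback.fst (η X) ε) hk₀.1
    have hφφ' : φ ≫ φ' = 𝟙 K := by
      rw [← cancel_mono k, Category.assoc, hφ', hφ, Category.id_comp]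
    have hφ'φ : φ' ≫ φ = 𝟙 _ := by
      rw [← cancel_mono (Limits.pullback.fst (η X) ε), Category.assoc, hφ, hφ',
        Category.id_comp]
    haveI : IsIso φ := ⟨⟨φ', hφφ', hφ'φ⟩⟩
    set p : K ⟶ W := φ ≫ Limits.pullback.snd (η X) ε with hpdef
    have hpε : p ≫ ε = k ≫ η X := by
      rw [hpdef, Category.assoc, ← hpb.w, ← Category.assoc, hφ]
    have hp₀ne : IsZNormalEpi Z (Limits.pullback.snd (η X) ε) :=
      hpn.normalEpiStable _ _ ε (η X) hpb.flip (hepi X)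
    obtain ⟨rp₀⟩ := hreg _ hp₀ne
    haveI := isRegularEpi_of_regularEpi rp₀
    haveI hpepi : Epi p := by rw [hpdef]; infer_instance
    obtain ⟨A₂, c, hc⟩ := hp₀ne
    have hctriv : IsZTrivial Z (c ≫ φ' ≫ η K) := (hetaK.comp_left φ').comp_left c
    obtain ⟨ω, hω, -⟩ := hc.2 _ (φ' ≫ η K) hctriv
    have hpω : p ≫ ω = η K := by
      rw [hpdef, Category.assoc, hω, ← Category.assoc, hφφ', Category.id_comp]
    obtain ⟨phat, hphat, -⟩ := hrefl K W hWF p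
    obtain ⟨rηK⟩ := hreg (η K) (hepi K)
    haveI := isRegularEpi_of_regularEpi rηK
    have hωp : ω ≫ phat = 𝟙 W := by
      rw [← cancel_epi p, ← Category.assoc, hpω, hphat, Category.comp_id]
    have hpω' : phat ≫ ω = 𝟙 (R K) := by
      rw [← cancel_epi (η K), ← Category.assoc, hphat, hpω, Category.comp_id]
    haveI : IsIso phat := ⟨⟨ω, hpω', hωp⟩⟩
    have hgp : g = phat ≫ ε := by
      rw [← cancel_epi (η K), hg, ← Category.assoc, hphat, hpε]
    haveI hgm : Mono g := by rw [hgp]; exact mono_comp _ _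
    -- build the pullback
    have key : ∀ s : Limits.PullbackCone (η X) g, IsZTrivial Z (s.fst ≫ η X) := by
      intro s
      exact ⟨W, s.snd ≫ phat, ε, hWZ, by rw [Category.assoc, ← hgp, ← s.condition]⟩
    exact IsPullback.of_isLimit (Limits.PullbackCone.IsLimit.mk hg.symm
      (fun s => (hk.2 s.pt s.fst (key s)).choose)
      (fun s => (hk.2 s.pt s.fst (key s)).choose_spec.1)
      (fun s => by
        rw [← cancel_mono g, Category.assoc, hg, ← Category.assoc,
          (hk.2 s.pt s.fst (key s)).choose_spec.1, s.condition])
      (fun s m hm1 _ => (hk.2 s.pt s.fst (key s)).choose_spec.2 m hm1))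
  · -- (ii) ⇒ (i)
    intro hii
    -- coreflections of F-objects are in F
    have corF : ∀ (X₀ W₀ : C) (ε₀ : W₀ ⟶ X₀), X₀ ∈ F → W₀ ∈ Z → Mono ε₀ →
        (∀ (M : C), M ∈ Z → ∀ g : M ⟶ X₀, ∃! g' : M ⟶ W₀, g' ≫ ε₀ = g) → W₀ ∈ F := by
      intro X₀ W₀ ε₀ hX₀ hW₀ hε₀m hε₀u
      haveI := hε₀m
      obtain ⟨r, hr, -⟩ := hrefl X₀ X₀ hX₀ (𝟙 X₀)
      have hrη : r ≫ η X₀ = 𝟙 (R X₀) := by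
        obtain ⟨u, hu, huniq⟩ := hrefl X₀ (R X₀) (hRF X₀) (η X₀)
        have e1 := huniq (r ≫ η X₀)
          (show η X₀ ≫ r ≫ η X₀ = η X₀ by rw [← Category.assoc, hr, Category.id_comp])
        have e2 := huniq (𝟙 _) (Category.comp_id _)
        rw [e1, e2]
      have hker : IsZKernel Z ε₀ (η X₀) := by
        constructor
        · exact ⟨W₀, 𝟙 W₀, ε₀ ≫ η X₀, hW₀, Category.id_comp _⟩
        · intro Y x hx
          have hxtriv : IsZTrivial Z x := by
            obtain ⟨M, u, v, hM, huv⟩ := hx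
            exact ⟨M, u, v ≫ r, hM, by
              rw [← Category.assoc, huv, Category.assoc, hr, Category.comp_id]⟩
          obtain ⟨M, u, v, hM, huv⟩ := hxtriv
          obtain ⟨v', hv', -⟩ := hε₀u M hM v
          refine ⟨u ≫ v', show (u ≫ v') ≫ ε₀ = x by rw [Category.assoc, hv', huv], ?_⟩
          intro y hy
          rw [← cancel_mono ε₀, hy, Category.assoc, hv', huv]
      obtain ⟨g₀, hg₀, -⟩ := hrefl W₀ (R X₀) (hRF X₀) (ε₀ ≫ η X₀)
      have hp := hii ε₀ hker g₀ hg₀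
      have hy : (g₀ ≫ r) ≫ η X₀ = 𝟙 (R W₀) ≫ g₀ := by
        rw [Category.assoc, hrη, Category.comp_id, Category.id_comp]
      have hσ1 : hp.lift (g₀ ≫ r) (𝟙 (R W₀)) hy ≫ ε₀ = g₀ ≫ r := hp.lift_fst _ _ _
      have hσ2 : hp.lift (g₀ ≫ r) (𝟙 (R W₀)) hy ≫ η W₀ = 𝟙 (R W₀) := hp.lift_snd _ _ _
      have hσ3 : η W₀ ≫ hp.lift (g₀ ≫ r) (𝟙 (R W₀)) hy = 𝟙 W₀ := by
        rw [← cancel_mono ε₀, Category.assoc, hσ1, ← Category.assoc, hg₀,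
          Category.assoc, hr, Category.comp_id, Category.id_comp]
      exact hFrep (hRF W₀) ⟨hp.lift (g₀ ≫ r) (𝟙 (R W₀)) hy, η W₀, hσ2, hσ3⟩
    refine ⟨{A | IsZTrivial Z (η A)}, ?_, ?_, ?_⟩
    · -- replete
      intro A B hA ψ
      obtain ⟨c, hc, -⟩ := hrefl A (R B) (hRF B) (ψ.hom ≫ η B)
      obtain ⟨M, u, v, hM, huv⟩ := hA
      have hmid : u ≫ v ≫ c = ψ.hom ≫ η B := by rw [← Category.assoc, huv, hc]
      exact ⟨M, ψ.inv ≫ u, v ≫ c, hM, by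
        rw [Category.assoc, hmid, ← Category.assoc, ψ.inv_hom_id, Category.id_comp]⟩
    · -- condition 1
      intro A B hA hB f
      obtain ⟨fbar, hfbar, -⟩ := hrefl A B hB f
      obtain ⟨M, u, v, hM, huv⟩ := hA
      exact ⟨M, u, v ≫ fbar, hM, by rw [← Category.assoc, huv, hfbar]⟩
    · -- condition 2
      intro X
      obtain ⟨W, ε, hWZ, hεm, hεu⟩ := hpn.monoCoreflective (R X)
      haveI := hεm
      have hpb := IsPullback.of_hasPullback (η X) ε
      have hker : IsZKernel Z (Limits.pullback.fst (η X) ε) (η X) :=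
        isZKernel_of_pullback hWZ hεm hεu hpb
      obtain ⟨A₀, f₀, hf₀⟩ := hepi X
      have hcoker : IsZCokernel Z (Limits.pullback.fst (η X) ε) (η X) :=
        isZCokernel_of_isZKernel hker hf₀
      obtain ⟨g, hg, -⟩ := hrefl _ (R X) (hRF X) (Limits.pullback.fst (η X) ε ≫ η X)
      have hp : IsPullback (Limits.pullback.fst (η X) ε)
          (η (Limits.pullback (η X) ε)) (η X) g := hii _ hker g hg
      haveI hk₀m : Mono (Limits.pullback.fst (η X) ε) := hker.mono
      -- g is a monomorphism
      haveI hgm : Mono g := by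
        refine ⟨fun {Y} u v huv => ?_⟩
        have hpb2 := IsPullback.of_hasPullback u (η (Limits.pullback (η X) ε))
        have hπ : IsZNormalEpi Z (Limits.pullback.fst u (η (Limits.pullback (η X) ε))) :=
          hpn.normalEpiStable _ _ u (η _) hpb2 (hepi _)
        obtain ⟨rπ⟩ := hreg _ hπ
        haveI := isRegularEpi_of_regularEpi rπ
        have hcomp : (Limits.pullback.snd u (η (Limits.pullback (η X) ε)) ≫
            Limits.pullback.fst (η X) ε) ≫ η X =
            (Limits.pullback.fst u (η (Limits.pullback (η X) ε)) ≫ v) ≫ g := by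
          rw [Category.assoc, hp.w, ← Category.assoc, ← hpb2.w, Category.assoc, huv,
            ← Category.assoc]
        have ht1 := hp.lift_fst _ _ hcomp
        have ht2 := hp.lift_snd _ _ hcomp
        have htκ : hp.lift _ _ hcomp = Limits.pullback.snd u (η (Limits.pullback (η X) ε)) := by
          rw [← cancel_mono (Limits.pullback.fst (η X) ε)]; exact ht1
        rw [← cancel_epi (Limits.pullback.fst u (η (Limits.pullback (η X) ε))), hpb2.w,
          ← htκ, ht2]
      -- W is in F
      have hWF : W ∈ F := corF (R X) W ε (hRF X) hWZ hεm hεu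
      obtain ⟨phat, hphat, -⟩ := hrefl _ W hWF (Limits.pullback.snd (η X) ε)
      obtain ⟨rηK⟩ := hreg (η (Limits.pullback (η X) ε)) (hepi _)
      haveI := isRegularEpi_of_regularEpi rηK
      have hpε : phat ≫ ε = g := by
        rw [← cancel_epi (η (Limits.pullback (η X) ε)), ← Category.assoc, hphat,
          ← hpb.w, hg]
      haveI hpm : Mono phat := by
        refine ⟨fun {Y} u v huv => ?_⟩
        rw [← cancel_mono g, ← hpε, ← Category.assoc, ← Category.assoc, huv]
      have hp₀ne : IsZNormalEpi Z (Limits.pullback.snd (η X) ε) :=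
        hpn.normalEpiStable _ _ ε (η X) hpb.flip (hepi X)
      obtain ⟨rp₀⟩ := hreg _ hp₀ne
      haveI := isRegularEpi_of_regularEpi rp₀
      haveI : StrongEpi (η (Limits.pullback (η X) ε) ≫ phat) := by
        rw [hphat]; infer_instance
      haveI : StrongEpi phat := strongEpi_of_strongEpi (η (Limits.pullback (η X) ε)) phat
      haveI : IsIso phat := isIso_of_mono_of_strongEpi phat
      have hηtriv : IsZTrivial Z (η (Limits.pullback (η X) ε)) :=
        ⟨W, Limits.pullback.snd (η X) ε, inv phat, hWZ, by
          rw [← hphat, Category.assoc, IsIso.hom_inv_id, Category.comp_id]⟩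
      exact ⟨Limits.pullback (η X) ε, R X, Limits.pullback.fst (η X) ε, η X,
        hηtriv, hRF X, hker, hcoker⟩
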